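/- Let m ≥ 1 be an integer and write P_μ^m(η) = α + βη + γη² + δη³ (type IV₃); set R_m(μ) = (γ+δ)(β+γ+δ) − αδ, the Hurwitz determinant Δ₂ of P_μ^m. For m ≥ 3, R_m(μ) > 0 for all μ > 0. For m = 1 and m = 2, R_m has exactly one positive root ν_m, and ν_m > μ_m, where μ_m is the unique positive root of q_m(μ) = P_μ^m(1/2). In particular, R_m(μ)/((m+1)(m+2)μ³) = [3+(m−1)μ]·s_m(μ) with s₁(μ) = (31−6μ²)/2 and s₂(μ) = (97+66μ−16μ²)/4. -/

import Mathlib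

/-- Degree-0 coefficient `α` of the type `IV₃` representative polynomial. -/
noncomputable def coeffA (μ : ℝ) : ℝ := (1 - μ) * (2 - μ) * (3 / 2 - μ)

/-- Degree-1 coefficient `β` of the type `IV₃` representative polynomial. -/
noncomputable def coeffB (m : ℕ) (μ : ℝ) : ℝ :=
  ((m : ℝ) + 1) * μ * (1 - μ) * (13 / 2 - 7 * μ)

/-- Degree-2 coefficient `γ` of the type `IV₃` representative polynomial. -/
noncomputable def coeffC (m : ℕ) (μ : ℝ) : ℝ :=
  3 * ((m : ℝ) + 1) * ((m : ℝ) + 2) * (3 / 2 - 2 * μ) * μ ^ 2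

/-- Degree-3 coefficient `δ` of the type `IV₃` representative polynomial. -/
noncomputable def coeffD (m : ℕ) (μ : ℝ) : ℝ :=
  ((m : ℝ) + 1) * ((m : ℝ) + 2) * ((m : ℝ) + 3) * μ ^ 3

/-- Hurwitz determinant `Δ₂ = (γ+δ)(β+γ+δ) - αδ` of `P_μ^m` (type `IV₃`). -/
noncomputable def RIV3 (m : ℕ) (μ : ℝ) : ℝ :=
  (coeffC m μ + coeffD m μ) * (coeffB m μ + coeffC m μ + coeffD m μ) -
    coeffA μ * coeffD m μ

/-- `q_m(μ) = P_μ^m(1/2)` for type `IV₃`. -/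
noncomputable def qIV3 (m : ℕ) (μ : ℝ) : ℝ :=
  coeffA μ + coeffB m μ * (1 / 2) + coeffC m μ * (1 / 2) ^ 2 + coeffD m μ * (1 / 2) ^ 3

/-!
Writing `m = k + 3`, the quotient `R_m(μ) / ((m+1)(m+2)μ³)` is a cubic in `μ` whose coefficients
are polynomials in `k` with nonnegative coefficients, so `R_m > 0` for `μ > 0` once `m ≥ 3`.
For `m = 1, 2` the quotient is `(3 + (m-1)μ) s_m(μ)` with `s_m` a downward quadratic and
`s_m(0) > 0`, which has exactly one positive root. The roots are separated by `2`:
`s_m > 0` on `(0, 2]`, while `q_m < 0` on `[2, ∞)`.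
-/

lemma eq_of_pos_roots_quadratic {a b c x y : ℝ} (ha : 0 < a) (hc : 0 < c) (hx : 0 < x)
    (hy : 0 < y) (hx0 : c + b * x - a * x ^ 2 = 0) (hy0 : c + b * y - a * y ^ 2 = 0) :
    x = y := by
  by_contra hxy
  -- two distinct roots have sum `b / a` and product `-c / a < 0`
  have hsum : b = a * (x + y) := by
    apply mul_right_cancel₀ (sub_ne_zero.mpr hxy)
    linear_combination hx0 - hy0
  have hprod : c = -(a * x * y) := by linear_combination hx0 - x * hsum
  have : 0 < a * x * y := by positivity
  linarith

lemma existsUnique_pos_root_quadratic {a b c : ℝ} (ha : 0 < a) (hc : 0 < c) :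
    ∃! x : ℝ, 0 < x ∧ c + b * x - a * x ^ 2 = 0 := by
  set s := Real.sqrt (b ^ 2 + 4 * a * c)
  have hs : s ^ 2 = b ^ 2 + 4 * a * c := Real.sq_sqrt (by positivity)
  have hbs : |b| < s := by
    rw [← Real.sqrt_sq_eq_abs]
    exact Real.sqrt_lt_sqrt (sq_nonneg b) (by linarith [mul_pos ha hc])
  have hpos : 0 < (b + s) / (2 * a) := div_pos (by linarith [neg_abs_le b]) (by positivity)
  have hroot : c + b * ((b + s) / (2 * a)) - a * ((b + s) / (2 * a)) ^ 2 = 0 := by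
    field_simp
    linear_combination -hs
  exact ⟨_, ⟨hpos, hroot⟩, fun y ⟨hy, hy0⟩ => eq_of_pos_roots_quadratic ha hc hy hpos hy0 hroot⟩

lemma existsUnique_pos_root_mul {f g : ℝ → ℝ} (hg : ∀ x, 0 < x → g x ≠ 0)
    (hf : ∃! x, 0 < x ∧ f x = 0) : ∃! x, 0 < x ∧ g x * f x = 0 :=
  (existsUnique_congr fun x => and_congr_right fun hx =>
    (mul_eq_zero.trans (or_iff_right (hg x hx))).symm).1 hf

lemma RIV3_add_three (k : ℕ) (μ : ℝ) :
    RIV3 (k + 3) μ = ((k : ℝ) + 4) * ((k : ℝ) + 5) * μ ^ 3 *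
      ((396 + 105 * k) / 4 + (107 * k ^ 2 + 616 * k + 804) / 4 * μ
        + (18 * k ^ 3 + 135 * k ^ 2 + 306 * k + 198) / 2 * μ ^ 2
        + ((k : ℝ) + 3) * (((k : ℝ) + 3) ^ 2 * k + 2) * μ ^ 3) := by
  simp only [RIV3, coeffA, coeffB, coeffC, coeffD]
  push_cast
  ring

lemma RIV3_pos_of_three_le {m : ℕ} (hm : 3 ≤ m) {μ : ℝ} (hμ : 0 < μ) : 0 < RIV3 m μ := by
  obtain ⟨k, rfl⟩ := Nat.exists_eq_add_of_le' hm
  rw [RIV3_add_three]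
  positivity

lemma RIV3_one (μ : ℝ) : RIV3 1 μ = 9 * μ ^ 3 * (31 - 6 * μ ^ 2) := by
  simp only [RIV3, coeffA, coeffB, coeffC, coeffD]
  push_cast
  ring

lemma RIV3_two (μ : ℝ) : RIV3 2 μ = 3 * μ ^ 3 * (3 + μ) * (97 + 66 * μ - 16 * μ ^ 2) := by
  simp only [RIV3, coeffA, coeffB, coeffC, coeffD]
  push_cast
  ring

lemma qIV3_one (μ : ℝ) : qIV3 1 μ = 3 - 9 / 4 * μ ^ 2 := by
  simp only [qIV3, coeffA, coeffB, coeffC, coeffD]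
  push_cast
  ring

lemma qIV3_two (μ : ℝ) : qIV3 2 μ = 3 + 13 / 4 * μ - 9 / 4 * μ ^ 2 - μ ^ 3 := by
  simp only [qIV3, coeffA, coeffB, coeffC, coeffD]
  push_cast
  ring

lemma existsUnique_pos_root_RIV3 {m : ℕ} (h1 : 1 ≤ m) (h2 : m ≤ 2) :
    ∃! ν : ℝ, 0 < ν ∧ RIV3 m ν = 0 := by
  interval_cases m
  · simpa only [RIV3_one, zero_mul, add_zero] using
      existsUnique_pos_root_mul (g := fun x => 9 * x ^ 3) (fun x hx => by positivity)
        (existsUnique_pos_root_quadratic (a := 6) (b := 0) (c := 31) (by norm_num) (by norm_num))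
  · simpa only [RIV3_two] using
      existsUnique_pos_root_mul (g := fun x => 3 * x ^ 3 * (3 + x)) (fun x hx => by positivity)
        (existsUnique_pos_root_quadratic (a := 16) (b := 66) (c := 97) (by norm_num) (by norm_num))

lemma two_lt_of_RIV3_eq_zero {m : ℕ} (h1 : 1 ≤ m) (h2 : m ≤ 2) {ν : ℝ} (hν : 0 < ν)
    (h : RIV3 m ν = 0) : 2 < ν := by
  by_contra! hν2
  have hν0 := hν.le
  interval_cases m
  · rw [RIV3_one] at h
    have : 0 < 31 - 6 * ν ^ 2 := by nlinarith
    exact absurd h (by positivity)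
  · rw [RIV3_two] at h
    have : 0 < 97 + 66 * ν - 16 * ν ^ 2 := by nlinarith
    exact absurd h (by positivity)

lemma lt_two_of_qIV3_eq_zero {m : ℕ} (h1 : 1 ≤ m) (h2 : m ≤ 2) {μ : ℝ} (h : qIV3 m μ = 0) :
    μ < 2 := by
  by_contra! hμ
  interval_cases m
  · rw [qIV3_one] at h
    nlinarith
  · rw [qIV3_two] at h
    nlinarith

/-- Hurwitz determinant `Δ₂` for type `IV₃`: positivity for `m ≥ 3`; for
`m = 1, 2` a unique positive root `ν_m` exceeding the unique positive root
`μ_m` of `q_m`; moreover `R_m(μ)/((m+1)(m+2)μ³) = [3+(m-1)μ]·s_m(μ)` with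
`s₁(μ) = (31-6μ²)/2` and `s₂(μ) = (97+66μ-16μ²)/4`. -/
theorem RIV3_sign :
    (∀ m : ℕ, 3 ≤ m → ∀ μ : ℝ, 0 < μ → 0 < RIV3 m μ) ∧
    (∀ m : ℕ, 1 ≤ m → m ≤ 2 → ∃! ν : ℝ, 0 < ν ∧ RIV3 m ν = 0) ∧
    (∀ m : ℕ, 1 ≤ m → m ≤ 2 → ∀ ν : ℝ, 0 < ν → RIV3 m ν = 0 →
      ∀ μm : ℝ, 0 < μm → qIV3 m μm = 0 → μm < ν) ∧
    (∀ μ : ℝ, RIV3 1 μ =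
      ((1 : ℝ) + 1) * ((1 : ℝ) + 2) * μ ^ 3 * (3 + ((1 : ℝ) - 1) * μ) *
        ((31 - 6 * μ ^ 2) / 2)) ∧
    (∀ μ : ℝ, RIV3 2 μ =
      ((2 : ℝ) + 1) * ((2 : ℝ) + 2) * μ ^ 3 * (3 + ((2 : ℝ) - 1) * μ) *
        ((97 + 66 * μ - 16 * μ ^ 2) / 4)) :=
  ⟨fun _ hm _ hμ => RIV3_pos_of_three_le hm hμ,
    fun _ h1 h2 => existsUnique_pos_root_RIV3 h1 h2,
    fun _ h1 h2 _ hν hR _ _ hq =>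
      (lt_two_of_qIV3_eq_zero h1 h2 hq).trans (two_lt_of_RIV3_eq_zero h1 h2 hν hR),
    fun μ => by rw [RIV3_one]; ring,
    fun μ => by rw [RIV3_two]; ring⟩
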